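/- arXiv:2303.17745 — 5 statements merged into one kernel-verified Lean document; each statement's English description precedes it below -/
import Mathlib

section
/- Let Y > 0, α > 0, and y ∈ [-Y, Y]. Define g(z) = Y·√(αz+1) − Y for z ≥ 0 and g(z) = −Y·√(−αz+1) + Y for z < 0. Then the function z ↦ (g(z) − y)² is convex on ℝ. -/
/-!
On `[0, ∞)` the function is `(Y √(α z + 1) - Y - y)²`, whose derivative
`α Y (Y - (Y + y) / √(α z + 1))` is increasing because `Y + y ≥ 0`; on `(-∞, 0]` it is the
mirror image `z ↦ (Y √(-α z + 1) - Y + y)²` of the same shape with `y` replaced by `-y`,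
using `Y - y ≥ 0`. The two one-sided derivatives agree at `0` (both equal `-α Y y`), so the
function is differentiable with monotone derivative, hence convex.
-/

open Set

theorem hasDerivAt_ite_le {E : Type*} [NormedAddCommGroup E] [NormedSpace ℝ E]
    {p q p' q' : ℝ → E} {a : ℝ}
    (hp : ∀ z, a ≤ z → HasDerivAt p (p' z) z) (hq : ∀ z, z ≤ a → HasDerivAt q (q' z) z)
    (ha : p a = q a) (ha' : p' a = q' a) (z : ℝ) :
    HasDerivAt (fun z => if a ≤ z then p z else q z) (if a ≤ z then p' z else q' z) z := by
  rcases lt_trichotomy z a with hz | rfl | hz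
  · have hf : (fun z => if a ≤ z then p z else q z) =ᶠ[nhds z] q := by
      filter_upwards [Iio_mem_nhds hz] with w hw
      exact if_neg (not_le.2 hw)
    rw [if_neg (not_le.2 hz)]
    exact (hq z hz.le).congr_of_eventuallyEq hf
  · have hright : HasDerivWithinAt (fun w => if z ≤ w then p w else q w) (p' z) (Ici z) z :=
      (hp z le_rfl).hasDerivWithinAt.congr (fun w hw => if_pos hw) (if_pos le_rfl)
    have hleft : HasDerivWithinAt (fun w => if z ≤ w then p w else q w) (p' z) (Iic z) z := by
      refine ha' ▸ (hq z le_rfl).hasDerivWithinAt.congr (fun w hw => ?_) (by simp [ha])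
      rcases (mem_Iic.1 hw).eq_or_lt with rfl | hw
      · simp [ha]
      · exact if_neg (not_le.2 hw)
    rw [if_pos le_rfl, ← hasDerivWithinAt_univ, ← Iic_union_Ici]
    exact hleft.union hright
  · have hf : (fun z => if a ≤ z then p z else q z) =ᶠ[nhds z] p := by
      filter_upwards [Ioi_mem_nhds hz] with w hw
      exact if_pos hw.le
    rw [if_pos hz.le]
    exact (hp z hz.le).congr_of_eventuallyEq hf

theorem monotone_ite_le {α β : Type*} [LinearOrder α] [Preorder β] {f g : α → β} {a : α}
    (hf : MonotoneOn f (Ici a)) (hg : MonotoneOn g (Iic a)) (ha : g a ≤ f a) :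
    Monotone (fun z => if a ≤ z then f z else g z) := by
  intro x w hxw
  by_cases hx : a ≤ x
  · simp only [hx, le_trans hx hxw, if_true]
    exact hf hx (le_trans hx hxw) hxw
  by_cases hw : a ≤ w
  · simp only [hx, hw, if_true, if_false]
    exact (hg (not_le.1 hx).le le_rfl (not_le.1 hx).le).trans (ha.trans (hf le_rfl hw hw))
  · simp only [hx, hw, if_false]
    exact hg (not_le.1 hx).le (not_le.1 hw).le hxw

theorem MonotoneOn.neg_comp_neg {G H : Type*} [AddCommGroup G] [PartialOrder G]
    [IsOrderedAddMonoid G] [AddCommGroup H] [PartialOrder H] [IsOrderedAddMonoid H] {f : G → H}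
    (hf : MonotoneOn f (Ici 0)) : MonotoneOn (fun x => -f (-x)) (Iic 0) :=
  fun _ hs _ ht hst => neg_le_neg (hf (neg_nonneg.2 ht) (neg_nonneg.2 hs) (neg_le_neg hst))

section SqrtLoss

variable (Y α c : ℝ)

noncomputable def sqrtLoss (t : ℝ) : ℝ := (Y * √(α * t + 1) - Y - c) ^ 2

noncomputable def sqrtLossDeriv (t : ℝ) : ℝ := α * Y * (Y - (Y + c) / √(α * t + 1))

variable {Y α c}

theorem hasDerivAt_sqrtLoss {t : ℝ} (ht : 0 < α * t + 1) :
    HasDerivAt (sqrtLoss Y α c) (sqrtLossDeriv Y α c t) t := by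
  have hlin : HasDerivAt (fun w => α * w + 1) α t := by
    simpa using ((hasDerivAt_id t).const_mul α).add_const 1
  have hs : √(α * t + 1) ≠ 0 := (Real.sqrt_pos.2 ht).ne'
  refine ((((hlin.sqrt ht.ne').const_mul Y).sub_const Y).sub_const c).fun_pow 2 |>.congr_deriv ?_
  simp only [sqrtLossDeriv]
  field_simp
  ring

theorem monotoneOn_sqrtLossDeriv (hα : 0 ≤ α) (hc : 0 ≤ α * Y * (Y + c)) :
    MonotoneOn (sqrtLossDeriv Y α c) (Ici 0) := by
  intro s hs t _ hst
  have hs_pos : 0 < √(α * s + 1) := Real.sqrt_pos.2 (by nlinarith [mem_Ici.1 hs])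
  have hst' : √(α * s + 1) ≤ √(α * t + 1) := Real.sqrt_le_sqrt (by nlinarith)
  have := div_le_div_of_nonneg_left hc hs_pos hst'
  simp only [sqrtLossDeriv, mul_sub, ← mul_div_assoc]
  linarith

theorem hasDerivAt_sqrtLoss_comp_neg {t : ℝ} (ht : 0 < α * -t + 1) :
    HasDerivAt (fun t => sqrtLoss Y α c (-t)) (-sqrtLossDeriv Y α c (-t)) t := by
  have h := (hasDerivAt_sqrtLoss (Y := Y) (c := c) ht).comp t (hasDerivAt_neg t)
  rwa [mul_neg_one] at h

end SqrtLoss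

theorem stmt2_general (Y α y : ℝ) (hα : 0 < α) (hy : -Y ≤ y ∧ y ≤ Y) :
    ConvexOn ℝ Set.univ (fun z : ℝ =>
      ((if 0 ≤ z then Y * Real.sqrt (α * z + 1) - Y
        else -Y * Real.sqrt (-α * z + 1) + Y) - y) ^ 2) := by
  obtain ⟨hy_lower, hy_upper⟩ := hy
  have hY : 0 ≤ Y := by linarith
  have hfun : (fun z : ℝ => ((if 0 ≤ z then Y * Real.sqrt (α * z + 1) - Y
        else -Y * Real.sqrt (-α * z + 1) + Y) - y) ^ 2) =
      fun z => if 0 ≤ z then sqrtLoss Y α y z else sqrtLoss Y α (-y) (-z) := by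
    funext z
    split_ifs
    · rfl
    · simp only [sqrtLoss, mul_neg, neg_mul]
      ring
  set d : ℝ → ℝ := fun z =>
    if 0 ≤ z then sqrtLossDeriv Y α y z else -sqrtLossDeriv Y α (-y) (-z)
  have hderiv : ∀ z, HasDerivAt (fun z => if 0 ≤ z then sqrtLoss Y α y z
      else sqrtLoss Y α (-y) (-z)) (d z) z :=
    hasDerivAt_ite_le (fun z hz => hasDerivAt_sqrtLoss (by nlinarith))
      (fun z hz => hasDerivAt_sqrtLoss_comp_neg (by nlinarith))
      (by simp [sqrtLoss]) (by simp [sqrtLossDeriv])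
  have hmono : Monotone d :=
    monotone_ite_le
      (monotoneOn_sqrtLossDeriv hα.le (mul_nonneg (mul_nonneg hα.le hY) (by linarith)))
      (monotoneOn_sqrtLossDeriv hα.le
        (mul_nonneg (mul_nonneg hα.le hY) (by linarith))).neg_comp_neg
      (by simp [sqrtLossDeriv])
  rw [hfun]
  refine Monotone.convexOn_univ_of_deriv (fun z => (hderiv z).differentiableAt) ?_
  rwa [funext fun z => (hderiv z).deriv]

/-- For `Y > 0`, `α > 0`, `y ∈ [-Y, Y]`, the composed squared loss
`z ↦ (g(z) - y)²` with the piecewise square-root transform `g` is convex on ℝ. -/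
theorem stmt2 (Y α y : ℝ) (hY : 0 < Y) (hα : 0 < α) (hy : -Y ≤ y ∧ y ≤ Y) :
    ConvexOn ℝ Set.univ (fun z : ℝ =>
      ((if 0 ≤ z then Y * Real.sqrt (α * z + 1) - Y
        else -Y * Real.sqrt (-α * z + 1) + Y) - y) ^ 2) :=
  stmt2_general Y α y hα hy
end

section
/- Let Y > 0, α > 0, and y ∈ [-Y, Y]. Define g(z) = sign(z)·(Y·√(α|z|+1) − Y). Then the function φ(z) = 2(g(z) − y)·g'(z), given explicitly by φ(z) = αY² − αY(Y+y)/√(αz+1) for z ≥ 0 and φ(z) = −αY² + αY(Y−y)/√(−αz+1) for z < 0, is continuous and monotone nondecreasing on ℝ. -/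
/-- The derivative `φ(z) = 2(g(z)-y)g'(z)` of the composed squared loss, given
piecewise explicitly, is continuous and monotone nondecreasing on ℝ. -/
theorem stmt3 (Y α y : ℝ) (hY : 0 < Y) (hα : 0 < α) (hy : -Y ≤ y ∧ y ≤ Y) :
    Continuous (fun z : ℝ =>
      if 0 ≤ z then α * Y ^ 2 - α * Y * (Y + y) / Real.sqrt (α * z + 1)
      else -(α * Y ^ 2) + α * Y * (Y - y) / Real.sqrt (-α * z + 1)) ∧
    Monotone (fun z : ℝ =>
      if 0 ≤ z then α * Y ^ 2 - α * Y * (Y + y) / Real.sqrt (α * z + 1)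
      else -(α * Y ^ 2) + α * Y * (Y - y) / Real.sqrt (-α * z + 1)) := by
  obtain ⟨hy1, hy2⟩ := hy
  have hc1 : 0 ≤ α * Y * (Y + y) := by
    apply mul_nonneg (mul_nonneg hα.le hY.le); linarith
  have hc2 : 0 ≤ α * Y * (Y - y) := by
    apply mul_nonneg (mul_nonneg hα.le hY.le); linarith
  have hpos1 : ∀ z : ℝ, 0 ≤ z → 0 < Real.sqrt (α * z + 1) := by
    intro z hz
    apply Real.sqrt_pos.mpr
    nlinarith
  have hpos2 : ∀ z : ℝ, z ≤ 0 → 0 < Real.sqrt (-α * z + 1) := by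
    intro z hz
    apply Real.sqrt_pos.mpr
    nlinarith
  have hone1 : ∀ z : ℝ, 0 ≤ z → 1 ≤ Real.sqrt (α * z + 1) := by
    intro z hz
    have := Real.sqrt_le_sqrt (show (1:ℝ) ≤ α * z + 1 by nlinarith)
    rwa [Real.sqrt_one] at this
  have hone2 : ∀ z : ℝ, z ≤ 0 → 1 ≤ Real.sqrt (-α * z + 1) := by
    intro z hz
    have := Real.sqrt_le_sqrt (show (1:ℝ) ≤ -α * z + 1 by nlinarith)
    rwa [Real.sqrt_one] at this
  constructor
  · apply continuous_if
    · intro a ha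
      have : frontier {x : ℝ | 0 ≤ x} = {0} := by
        rw [show {x : ℝ | 0 ≤ x} = Set.Ici 0 from rfl, frontier_Ici]
      rw [this] at ha
      simp only [Set.mem_singleton_iff] at ha
      subst ha
      norm_num
      ring
    · have hcl : closure {x : ℝ | 0 ≤ x} = Set.Ici 0 := by
        rw [show {x : ℝ | 0 ≤ x} = Set.Ici 0 from rfl]
        exact isClosed_Ici.closure_eq
      rw [hcl]
      apply ContinuousOn.sub continuousOn_const
      apply ContinuousOn.div continuousOn_const
      · exact (Real.continuous_sqrt.comp (by continuity)).continuousOn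
      · intro z hz
        exact (hpos1 z hz).ne'
    · have hcl : closure {x : ℝ | ¬ 0 ≤ x} = Set.Iic 0 := by
        rw [show {x : ℝ | ¬ 0 ≤ x} = Set.Iio 0 from by ext x; simp, closure_Iio]
      rw [hcl]
      apply ContinuousOn.add continuousOn_const
      apply ContinuousOn.div continuousOn_const
      · exact (Real.continuous_sqrt.comp (by continuity)).continuousOn
      · intro z hz
        exact (hpos2 z hz).ne'
  · intro a b hab
    by_cases ha : 0 ≤ a
    · have hb : 0 ≤ b := le_trans ha hab
      simp only [if_pos ha, if_pos hb]
      have hs : Real.sqrt (α * a + 1) ≤ Real.sqrt (α * b + 1) :=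
        Real.sqrt_le_sqrt (by nlinarith)
      have key : α * Y * (Y + y) / Real.sqrt (α * b + 1) ≤
          α * Y * (Y + y) / Real.sqrt (α * a + 1) :=
        div_le_div_of_nonneg_left hc1 (hpos1 a ha) hs
      linarith
    · push_neg at ha
      by_cases hb : 0 ≤ b
      · simp only [if_neg (not_le.mpr ha), if_pos hb]
        have A : α * Y * (Y - y) / Real.sqrt (-α * a + 1) ≤ α * Y * (Y - y) :=
          div_le_self hc2 (hone2 a ha.le)
        have B : α * Y * (Y + y) / Real.sqrt (α * b + 1) ≤ α * Y * (Y + y) :=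
          div_le_self hc1 (hone1 b hb)
        nlinarith
      · simp only [if_neg (not_le.mpr ha), if_neg hb]
        push_neg at hb
        have hs : Real.sqrt (-α * b + 1) ≤ Real.sqrt (-α * a + 1) :=
          Real.sqrt_le_sqrt (by nlinarith)
        have key : α * Y * (Y - y) / Real.sqrt (-α * a + 1) ≤
            α * Y * (Y - y) / Real.sqrt (-α * b + 1) :=
          div_le_div_of_nonneg_left hc2 (hpos2 b hb.le) hs |>.trans_eq rfl
        linarith
end

section
/- Let Y > 0 and α > 0, and let y ∈ ℝ with |y| > Y. Then there exists a point at which the function z ↦ (g(z) − y)² with g(z) = sign(z)·(Y·√(α|z|+1) − Y) fails to be convex; i.e., the hypothesis |y| ≤ Y is necessary. -/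
/-- If `|y| > Y`, the composed squared loss `z ↦ (g(z) - y)²` fails to be convex:
the hypothesis `|y| ≤ Y` is necessary. -/
theorem stmt10 (Y α y : ℝ) (hY : 0 < Y) (hα : 0 < α) (hy : Y < |y|) :
    ¬ ConvexOn ℝ Set.univ (fun z : ℝ =>
      (Real.sign z * (Y * Real.sqrt (α * |z| + 1) - Y) - y) ^ 2) := by
  intro hc
  have hα' : α ≠ 0 := ne_of_gt hα
  set s := Real.sqrt (5/2) with hs_def
  have hs2 : s ^ 2 = 5/2 := Real.sq_sqrt (by norm_num)
  have hsnn : 0 ≤ s := Real.sqrt_nonneg _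
  have hs : 3/2 < s := by nlinarith
  have hsq4 : Real.sqrt 4 = 2 := by
    rw [show (4:ℝ) = 2^2 by norm_num, Real.sqrt_sq (by norm_num)]
  have h3α : 0 < 3/α := by positivity
  have v0 : Real.sign (0:ℝ) * (Y * Real.sqrt (α * |(0:ℝ)| + 1) - Y) - y = -y := by
    simp
  rcases lt_abs.mp hy with h1 | h1
  · -- Y < y: use points 0 and -(3/α), midpoint -(3/(2*α))
    have H := hc.2 (Set.mem_univ (0:ℝ)) (Set.mem_univ (-(3/α)))
      (by norm_num : (0:ℝ) ≤ 1/2) (by norm_num : (0:ℝ) ≤ 1/2) (by norm_num)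
    simp only [smul_eq_mul] at H
    have harg : (1/2) * (0:ℝ) + (1/2) * (-(3/α)) = -(3/(2*α)) := by ring
    rw [harg] at H
    have habs1 : |(-(3/α))| = 3/α := by rw [abs_neg, abs_of_pos h3α]
    have habs2 : |(-(3/(2*α)))| = 3/(2*α) := by
      rw [abs_neg, abs_of_pos (by positivity)]
    have hsgn1 : Real.sign (-(3/α)) = -1 := Real.sign_of_neg (by linarith)
    have hsgn2 : Real.sign (-(3/(2*α))) = -1 := Real.sign_of_neg (by
      have : 0 < 3/(2*α) := by positivity
      linarith)
    have e1 : α * (3/α) + 1 = 4 := by field_simp; ring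
    have e2 : α * (3/(2*α)) + 1 = 5/2 := by field_simp; ring
    rw [v0, habs1, habs2, hsgn1, hsgn2, e1, e2, hsq4, ← hs_def] at H
    nlinarith [mul_pos (sub_pos.mpr h1) hY]
  · -- Y < -y: use points 0 and 3/α, midpoint 3/(2*α)
    have H := hc.2 (Set.mem_univ (0:ℝ)) (Set.mem_univ (3/α))
      (by norm_num : (0:ℝ) ≤ 1/2) (by norm_num : (0:ℝ) ≤ 1/2) (by norm_num)
    simp only [smul_eq_mul] at H
    have harg : (1/2) * (0:ℝ) + (1/2) * (3/α) = 3/(2*α) := by ring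
    rw [harg] at H
    have habs1 : |(3/α)| = 3/α := abs_of_pos h3α
    have habs2 : |(3/(2*α))| = 3/(2*α) := abs_of_pos (by positivity)
    have hsgn1 : Real.sign (3/α) = 1 := Real.sign_of_pos h3α
    have hsgn2 : Real.sign (3/(2*α)) = 1 := Real.sign_of_pos (by positivity)
    have e1 : α * (3/α) + 1 = 4 := by field_simp; ring
    have e2 : α * (3/(2*α)) + 1 = 5/2 := by field_simp; ring
    rw [v0, habs1, habs2, hsgn1, hsgn2, e1, e2, hsq4, ← hs_def] at H
    nlinarith [mul_pos (sub_pos.mpr h1) hY]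
end

section
/- Let Y > 0, α > 0, y ∈ [−Y, Y], and let targets y_1,…,y_N ∈ [−Y, Y] and features x_1,…,x_N ∈ ℝ^d be given. With g(z) = sign(z)·(Y·√(α|z|+1) − Y), the cumulative loss L(w) = ∑_{n=1}^N (g(⟨w, x_n⟩) − y_n)² is convex on ℝ^d. -/
/-!
On `z ≥ 0` the link is `g z = Y (√(α z + 1) - 1)`, and `g` is odd. It is differentiable at `0`
too, because `g z = z · Y α / (1 + √(α |z| + 1))`. Hence `(g z - y)²` has derivative
`Y α (g z - y) / √(α |z| + 1)`, which is `Y α (Y - (Y + y) / √(α z + 1))` on `z ≥ 0` and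
`Y α ((Y - y) / √(-α z + 1) - Y)` on `z ≤ 0`. Both pieces are nondecreasing precisely because
`Y + y ≥ 0` and `Y - y ≥ 0`, so each scalar loss is convex, and `L` is a sum of such losses
composed with linear forms.
-/

open Set

theorem hasDerivAt_of_sub_eq_mul {𝕜 : Type*} [NontriviallyNormedField 𝕜] {f h : 𝕜 → 𝕜} {a : 𝕜}
    (hfh : ∀ w, f w - f a = (w - a) * h w) (hh : ContinuousAt h a) : HasDerivAt f (h a) a := by
  rw [hasDerivAt_iff_tendsto_slope]
  refine (hh.tendsto.mono_left nhdsWithin_le_nhds).congr' ?_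
  filter_upwards [self_mem_nhdsWithin] with w hw
  rw [slope_def_field, hfh, mul_div_cancel_left₀ _ (sub_ne_zero.2 hw)]

theorem ConvexOn.finsetSum {𝕜 E β ι : Type*} [Semiring 𝕜] [PartialOrder 𝕜] [AddCommMonoid E]
    [AddCommMonoid β] [PartialOrder β] [IsOrderedAddMonoid β] [SMul 𝕜 E] [Module 𝕜 β]
    {s : Set E} (hs : Convex 𝕜 s) (t : Finset ι) {f : ι → E → β}
    (hf : ∀ i ∈ t, ConvexOn 𝕜 s (f i)) : ConvexOn 𝕜 s (fun x => ∑ i ∈ t, f i x) := by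
  simpa only [Finset.sum_fn] using
    Finset.sum_induction f (ConvexOn 𝕜 s) (fun _ _ => ConvexOn.add) (convexOn_const 0 hs) hf

theorem ConvexOn.comp_sum_mul {ι : Type*} [Fintype ι] {f : ℝ → ℝ} (hf : ConvexOn ℝ univ f)
    (x : ι → ℝ) : ConvexOn ℝ univ (fun w : ι → ℝ => f (∑ i, w i * x i)) := by
  simpa [Function.comp_def, mul_comm] using
    hf.comp_linearMap (∑ i, x i • LinearMap.proj (R := ℝ) (φ := fun _ : ι => ℝ) i)

noncomputable def signedSqrtTransform (Y α z : ℝ) : ℝ :=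
  Real.sign z * (Y * √(α * |z| + 1) - Y)

noncomputable def sqLossDeriv (Y α y z : ℝ) : ℝ :=
  Y * α * (signedSqrtTransform Y α z - y) / √(α * |z| + 1)

section

variable {Y α : ℝ}

theorem signedSqrtTransform_of_nonneg {z : ℝ} (hz : 0 ≤ z) :
    signedSqrtTransform Y α z = Y * √(α * z + 1) - Y := by
  rcases hz.eq_or_lt with rfl | hz
  · simp [signedSqrtTransform]
  · rw [signedSqrtTransform, Real.sign_of_pos hz, abs_of_pos hz, one_mul]

theorem signedSqrtTransform_of_nonpos {z : ℝ} (hz : z ≤ 0) :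
    signedSqrtTransform Y α z = Y - Y * √(α * -z + 1) := by
  rcases hz.eq_or_lt with rfl | hz
  · simp [signedSqrtTransform]
  · rw [signedSqrtTransform, Real.sign_of_neg hz, abs_of_neg hz]; ring

theorem signedSqrtTransform_eq_mul_div (hα : 0 ≤ α) (z : ℝ) :
    signedSqrtTransform Y α z = z * (Y * α / (1 + √(α * |z| + 1))) := by
  have hs : √(α * |z| + 1) ^ 2 = α * |z| + 1 := Real.sq_sqrt (by positivity)
  rw [mul_div_assoc', eq_div_iff (by positivity)]
  rcases le_total 0 z with hz | hz
  · rw [signedSqrtTransform_of_nonneg hz]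
    rw [abs_of_nonneg hz] at hs ⊢
    linear_combination Y * hs
  · rw [signedSqrtTransform_of_nonpos hz]
    rw [abs_of_nonpos hz] at hs ⊢
    linear_combination (-Y) * hs

theorem hasDerivAt_signedSqrtTransform (hα : 0 ≤ α) (z : ℝ) :
    HasDerivAt (signedSqrtTransform Y α) (Y * α / (2 * √(α * |z| + 1))) z := by
  rcases lt_trichotomy z 0 with hz | rfl | hz
  · have hu : HasDerivAt (fun w => α * -w + 1) (α * -1) z :=
      ((hasDerivAt_neg z).const_mul α).add_const 1
    have hg := ((hu.sqrt (by nlinarith)).const_mul Y).const_sub Y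
    refine (hg.congr_of_eventuallyEq ?_).congr_deriv ?_
    · filter_upwards [Iio_mem_nhds hz] with w hw using signedSqrtTransform_of_nonpos hw.le
    · rw [abs_of_neg hz]; ring
  · have hh : ContinuousAt (fun w => Y * α / (1 + √(α * |w| + 1))) 0 :=
      ContinuousAt.div (by fun_prop) (by fun_prop) (by positivity)
    refine (hasDerivAt_of_sub_eq_mul (fun w => ?_) hh).congr_deriv ?_
    · rw [signedSqrtTransform_eq_mul_div hα, signedSqrtTransform_eq_mul_div hα 0]; ring
    · norm_num
  · have hu : HasDerivAt (fun w => α * w + 1) (α * 1) z :=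
      ((hasDerivAt_id z).const_mul α).add_const 1
    have hg := ((hu.sqrt (by positivity)).const_mul Y).sub_const Y
    refine (hg.congr_of_eventuallyEq ?_).congr_deriv ?_
    · filter_upwards [Ioi_mem_nhds hz] with w hw using signedSqrtTransform_of_nonneg hw.le
    · rw [abs_of_pos hz]; ring

theorem hasDerivAt_sq_signedSqrtTransform_sub (hα : 0 ≤ α) (y z : ℝ) :
    HasDerivAt (fun z => (signedSqrtTransform Y α z - y) ^ 2) (sqLossDeriv Y α y z) z := by
  refine (((hasDerivAt_signedSqrtTransform hα z).sub_const y).pow 2).congr_deriv ?_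
  have : √(α * |z| + 1) ≠ 0 := by positivity
  rw [sqLossDeriv]
  field_simp
  ring

theorem sqLossDeriv_of_nonneg (hα : 0 ≤ α) (y : ℝ) {z : ℝ} (hz : 0 ≤ z) :
    sqLossDeriv Y α y z = Y * α * (Y - (Y + y) / √(α * z + 1)) := by
  rw [sqLossDeriv, signedSqrtTransform_of_nonneg hz, abs_of_nonneg hz]
  have : √(α * z + 1) ≠ 0 := by positivity
  field_simp
  ring

theorem sqLossDeriv_of_nonpos (hα : 0 ≤ α) (y : ℝ) {z : ℝ} (hz : z ≤ 0) :
    sqLossDeriv Y α y z = Y * α * ((Y - y) / √(α * -z + 1) - Y) := by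
  rw [sqLossDeriv, signedSqrtTransform_of_nonpos hz, abs_of_nonpos hz]
  have : 0 ≤ -z := by linarith
  have hs : √(α * -z + 1) ≠ 0 := by positivity
  generalize √(α * -z + 1) = s at hs ⊢
  field_simp
  ring

theorem monotone_sqLossDeriv (hα : 0 ≤ α) {y : ℝ} (hy₁ : -Y ≤ y) (hy₂ : y ≤ Y) :
    Monotone (sqLossDeriv Y α y) := by
  have hYα : 0 ≤ Y * α := mul_nonneg (by linarith) hα
  have hYy : 0 ≤ Y + y := by linarith
  have hYy' : 0 ≤ Y - y := by linarith
  refine MonotoneOn.Iic_union_Ici (a := 0) (fun a (ha : a ≤ 0) b (hb : b ≤ 0) hab => ?_)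
    (fun a (ha : 0 ≤ a) b (hb : 0 ≤ b) hab => ?_)
  · rw [sqLossDeriv_of_nonpos hα y ha, sqLossDeriv_of_nonpos hα y hb]
    have : 0 ≤ -b := by linarith
    gcongr
  · rw [sqLossDeriv_of_nonneg hα y ha, sqLossDeriv_of_nonneg hα y hb]
    gcongr

theorem convexOn_sq_signedSqrtTransform_sub (hα : 0 ≤ α) {y : ℝ} (hy₁ : -Y ≤ y) (hy₂ : y ≤ Y) :
    ConvexOn ℝ univ (fun z => (signedSqrtTransform Y α z - y) ^ 2) := by
  have hderiv := hasDerivAt_sq_signedSqrtTransform_sub (Y := Y) hα y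
  refine Monotone.convexOn_univ_of_deriv (fun z => (hderiv z).differentiableAt) ?_
  rw [funext fun z => (hderiv z).deriv]
  exact monotone_sqLossDeriv hα hy₁ hy₂

end

theorem stmt11_general (d N : ℕ) (Y α : ℝ) (hα : 0 < α)
    (y : Fin N → ℝ) (hy : ∀ n, -Y ≤ y n ∧ y n ≤ Y) (x : Fin N → Fin d → ℝ) :
    ConvexOn ℝ Set.univ (fun w : Fin d → ℝ =>
      ∑ n, (Real.sign (∑ i, w i * x n i)
        * (Y * Real.sqrt (α * |∑ i, w i * x n i| + 1) - Y) - y n) ^ 2) := by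
  exact ConvexOn.finsetSum convex_univ Finset.univ fun n _ =>
    (convexOn_sq_signedSqrtTransform_sub hα.le (hy n).1 (hy n).2).comp_sum_mul (x n)

/-- With targets in `[-Y, Y]`, the cumulative squared loss
`L(w) = ∑ₙ (g ⟨w, xₙ⟩ - yₙ)²` with the square-root transform `g` is convex on ℝ^d. -/
theorem stmt11 (d N : ℕ) (Y α : ℝ) (hY : 0 < Y) (hα : 0 < α)
    (y : Fin N → ℝ) (hy : ∀ n, -Y ≤ y n ∧ y n ≤ Y) (x : Fin N → Fin d → ℝ) :
    ConvexOn ℝ Set.univ (fun w : Fin d → ℝ =>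
      ∑ n, (Real.sign (∑ i, w i * x n i)
        * (Y * Real.sqrt (α * |∑ i, w i * x n i| + 1) - Y) - y n) ^ 2) :=
  stmt11_general d N Y α hα y hy x
end

section
/- Let g : ℝ → ℝ be convex (or concave) and differentiable, and suppose that for every y ∈ ℝ the function z ↦ (g(z) − y)² is convex. If g is twice differentiable, then g''(z) = 0 for all z, i.e., g is affine. -/
/-! Convexity of `(g - y)²` makes its second derivative `2 g'(z)² + 2 (g(z) - y) g''(z)`
nonnegative for every `y`; as a function of `y` this is affine with slope `-2 g''(z)`, and an
affine function bounded below on all of `ℝ` has slope zero. -/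

open Set

lemma eq_zero_of_forall_nonneg_add_mul {a b : ℝ} (h : ∀ y : ℝ, 0 ≤ a + y * b) : b = 0 := by
  by_contra hb
  have := h (-(a + 1) / b)
  rw [div_mul_cancel₀ _ hb] at this
  linarith

lemma ConvexOn.nonneg_of_hasDerivAt_deriv {f : ℝ → ℝ} {x f'' : ℝ} (hf : ConvexOn ℝ univ f)
    (hd : Differentiable ℝ f) (h : HasDerivAt (deriv f) f'' x) : 0 ≤ f'' :=
  h.nonneg_of_monotone (monotoneOn_univ.mp (hf.monotoneOn_deriv fun w _ => hd w))

lemma hasDerivAt_deriv_sub_const_sq {g : ℝ → ℝ} {x g'' : ℝ} (y : ℝ) (hg : Differentiable ℝ g)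
    (h : HasDerivAt (deriv g) g'' x) :
    HasDerivAt (deriv fun w => (g w - y) ^ 2)
      (2 * deriv g x ^ 2 + 2 * (g x - y) * g'') x := by
  have hfirst : deriv (fun w => (g w - y) ^ 2) = fun w => 2 * (g w - y) * deriv g w := by
    ext w
    simpa using (((hg w).hasDerivAt.sub_const y).fun_pow 2).deriv
  rw [hfirst]
  exact ((((hg x).hasDerivAt.sub_const y).const_mul 2).fun_mul h).congr_deriv (by ring)

theorem stmt14_general (g : ℝ → ℝ)
    (hdiff : Differentiable ℝ g) (hdiff2 : Differentiable ℝ (deriv g))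
    (hconv : ∀ y : ℝ, ConvexOn ℝ Set.univ (fun z : ℝ => (g z - y) ^ 2)) :
    ∀ z : ℝ, deriv (deriv g) z = 0 := by
  intro z
  set c := deriv (deriv g) z
  have hsecond : ∀ y : ℝ, 0 ≤ 2 * deriv g z ^ 2 + 2 * (g z - y) * c := fun y =>
    (hconv y).nonneg_of_hasDerivAt_deriv ((hdiff.sub_const y).pow 2)
      (hasDerivAt_deriv_sub_const_sq y hdiff (hdiff2 z).hasDerivAt)
  have hslope : -2 * c = 0 :=
    eq_zero_of_forall_nonneg_add_mul (a := 2 * deriv g z ^ 2 + 2 * g z * c) fun y => by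
      linarith [hsecond y]
  linarith

/-- If `g` is convex or concave, twice differentiable, and `z ↦ (g(z) - y)²` is convex
for every target `y`, then `g'' ≡ 0`, i.e. `g` is affine. -/
theorem stmt14 (g : ℝ → ℝ)
    (hcc : ConvexOn ℝ Set.univ g ∨ ConcaveOn ℝ Set.univ g)
    (hdiff : Differentiable ℝ g) (hdiff2 : Differentiable ℝ (deriv g))
    (hconv : ∀ y : ℝ, ConvexOn ℝ Set.univ (fun z : ℝ => (g z - y) ^ 2)) :
    ∀ z : ℝ, deriv (deriv g) z = 0 :=
  stmt14_general g hdiff hdiff2 hconv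
end
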